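/- Let g : 𝕋² → ℝ be a function such that for every n ≥ 1, every nonzero y ∈ ℤⁿ, every tuple of distinct rational points x₁,…,xₙ ∈ ℚ²/ℤ², and every z ∈ ℚ, one has Σ_j y_j·g(x_j) ≠ z. Let N ≥ 1, B ∈ GL(2, ℤ/Nℤ). Define eigenvalues λ_{ξ,j} = exp(2πi·((N/T_ξ)·Σ_{n=1}^{T_ξ} g(B^n ξ / N) + j/T_ξ)) for B-orbit representatives ξ ∈ (ℤ/Nℤ)² and 1 ≤ j ≤ T_ξ, where B^n ξ / N denotes the rational point of 𝕋² obtained from a lift of B^n ξ divided by N. Then λ_{ξ,j} = λ_{η,k} implies that ξ and η lie in the same B-orbit and j = k. -/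

import Mathlib

/-!
Since `B` is invertible, `v ↦ B v` permutes the finite set `(ℤ/Nℤ)²`, so every `ξ` is periodic
and `Σ_{n=1}^{T_ξ} g(B^n ξ / N)` is the sum `S_ξ` of `g` over the orbit of `ξ`. If `λ_{ξ,j} = λ_{η,k}`,
then `(N S_ξ + j)/T_ξ - (N S_η + k)/T_η` is an integer `z`. For equal orbits this reads
`(j - k)/T = z`, forcing `j = k`; for distinct (hence disjoint) orbits,
`N T_η S_ξ - N T_ξ S_η = z T_ξ T_η - j T_η + k T_ξ` is a nontrivial integer combination of values
of `g` at distinct rational points taking a rational value, which the hypothesis on `g` forbids.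
-/

noncomputable def e (x : ℝ) : ℂ := Complex.exp (2 * Real.pi * Complex.I * x)

open Function Finset

lemma exists_int_sub_eq_of_e_eq {a b : ℝ} (h : e a = e b) : ∃ z : ℤ, a - b = z := by
  obtain ⟨z, hz⟩ := Complex.exp_eq_exp_iff_exists_int.mp h
  refine ⟨z, ?_⟩
  have h2πi : (2 * Real.pi * Complex.I : ℂ) ≠ 0 := by simp [Real.pi_ne_zero]
  have : ((a - b : ℝ) : ℂ) = z := by
    push_cast
    apply mul_left_cancel₀ h2πi
    linear_combination hz
  exact_mod_cast this

lemma Matrix.pow_mulVec_eq_iterate {n R : Type*} [Fintype n] [DecidableEq n] [Semiring R]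
    (B : Matrix n n R) (m : ℕ) (v : n → R) : (B ^ m).mulVec v = B.mulVec^[m] v := by
  induction m with
  | zero => simp
  | succ m ih => rw [pow_succ', ← Matrix.mulVec_mulVec, ih, iterate_succ_apply']

section OrbitFinset

variable {α : Type*} {f : α → α} {x y : α}

lemma injOn_iterate_Icc_minimalPeriod (hx : x ∈ periodicPts f) :
    Set.InjOn (f^[·] x) (Icc 1 (minimalPeriod f x)) := by
  intro m hm n hn hmn
  simp only [coe_Icc, Set.mem_Icc] at hm hn
  have hfx : minimalPeriod f (f x) = minimalPeriod f x := minimalPeriod_apply hx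
  have hshift : f^[m - 1] (f x) = f^[n - 1] (f x) := by
    rwa [← iterate_succ_apply, ← iterate_succ_apply, Nat.succ_eq_add_one, Nat.succ_eq_add_one,
      Nat.sub_add_cancel hm.1, Nat.sub_add_cancel hn.1]
  have := (iterate_eq_iterate_iff_of_lt_minimalPeriod (by omega) (by omega)).mp hshift
  omega

lemma exists_mem_Icc_iterate_eq (hx : x ∈ periodicPts f) (m : ℕ) :
    ∃ n ∈ Icc 1 (minimalPeriod f x), f^[n] x = f^[m] x := by
  have hpos := minimalPeriod_pos_of_mem_periodicPts hx
  rw [← iterate_mod_minimalPeriod_eq]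
  rcases Nat.eq_zero_or_pos (m % minimalPeriod f x) with h | h
  · refine ⟨minimalPeriod f x, mem_Icc.2 ⟨hpos, le_rfl⟩, ?_⟩
    rw [h, iterate_minimalPeriod, iterate_zero_apply]
  · exact ⟨_, mem_Icc.2 ⟨h, (Nat.mod_lt _ hpos).le⟩, rfl⟩

variable [DecidableEq α]

noncomputable def orbitFinset (f : α → α) (x : α) : Finset α :=
  (Icc 1 (minimalPeriod f x)).image (f^[·] x)

lemma mem_orbitFinset (hx : x ∈ periodicPts f) : y ∈ orbitFinset f x ↔ ∃ m, f^[m] x = y := by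
  simp only [orbitFinset, mem_image]
  constructor
  · rintro ⟨n, -, rfl⟩
    exact ⟨n, rfl⟩
  · rintro ⟨m, rfl⟩
    exact exists_mem_Icc_iterate_eq hx m

lemma self_mem_orbitFinset (hx : x ∈ periodicPts f) : x ∈ orbitFinset f x :=
  (mem_orbitFinset hx).2 ⟨0, rfl⟩

lemma coe_orbitFinset (hx : x ∈ periodicPts f) :
    (orbitFinset f x : Set α) = {y | ∃ m : ℕ, y = f^[m] x} := by
  ext y
  simp only [mem_coe, mem_orbitFinset hx, Set.mem_ofPred_eq, eq_comm]

lemma card_orbitFinset (hx : x ∈ periodicPts f) : #(orbitFinset f x) = minimalPeriod f x := by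
  rw [orbitFinset, card_image_of_injOn (injOn_iterate_Icc_minimalPeriod hx), Nat.card_Icc,
    Nat.add_sub_cancel]

lemma sum_orbitFinset {M : Type*} [AddCommMonoid M] (hx : x ∈ periodicPts f) (G : α → M) :
    ∑ p ∈ orbitFinset f x, G p = ∑ n ∈ Icc 1 (minimalPeriod f x), G (f^[n] x) :=
  sum_image (injOn_iterate_Icc_minimalPeriod hx)

lemma orbitFinset_iterate (hx : x ∈ periodicPts f) (m : ℕ) :
    orbitFinset f (f^[m] x) = orbitFinset f x := by
  have hx' : f^[m] x ∈ periodicPts f := by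
    rw [← minimalPeriod_pos_iff_mem_periodicPts, minimalPeriod_apply_iterate hx]
    exact minimalPeriod_pos_of_mem_periodicPts hx
  ext y
  rw [mem_orbitFinset hx', mem_orbitFinset hx, ← mem_periodicOrbit_iff hx',
    ← mem_periodicOrbit_iff hx, periodicOrbit_apply_iterate_eq hx]

lemma disjoint_orbitFinset (hx : x ∈ periodicPts f) (hy : y ∈ periodicPts f)
    (hxy : orbitFinset f x ≠ orbitFinset f y) : Disjoint (orbitFinset f x) (orbitFinset f y) := by
  rw [disjoint_left]
  intro p hpx hpy
  obtain ⟨m, rfl⟩ := (mem_orbitFinset hx).1 hpx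
  obtain ⟨n, hn⟩ := (mem_orbitFinset hy).1 hpy
  exact hxy (by rw [← orbitFinset_iterate hx m, ← hn, orbitFinset_iterate hy n])

end OrbitFinset

noncomputable def torusPoint {ι : Type*} (N : ℕ) (p : ι → ZMod N) : ι → ℝ :=
  fun i => ((p i).val : ℝ) / N

lemma eq_of_torusPoint_sub_mem_int {ι : Type*} {N : ℕ} [NeZero N] {v w : ι → ZMod N}
    (h : ∀ l, ∃ k : ℤ, torusPoint N v l - torusPoint N w l = k) : v = w := by
  funext l
  obtain ⟨k, hk⟩ := h l
  have hN : (N : ℝ) ≠ 0 := NeZero.ne _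
  have hint : ((v l).val : ℤ) - (w l).val = N * k := by
    simp only [torusPoint] at hk
    field_simp at hk
    exact_mod_cast hk
  have := congrArg (Int.cast : ℤ → ZMod N) hint
  push_cast [ZMod.natCast_val, ZMod.cast_id', ZMod.natCast_self, zero_mul] at this
  exact sub_eq_zero.1 this

def IrrationalOnRatCombinations {ι : Type*} (g : (ι → ℝ) → ℝ) : Prop :=
  ∀ n : ℕ, 1 ≤ n → ∀ y : Fin n → ℤ, y ≠ 0 →
    ∀ x : Fin n → (ι → ℝ), (∀ i l, ∃ q : ℚ, x i l = (q : ℝ)) →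
      (∀ i j, i ≠ j → ¬ ∀ l, ∃ k : ℤ, x i l - x j l = (k : ℝ)) →
    ∀ z : ℚ, ∑ i, (y i : ℝ) * g (x i) ≠ (z : ℝ)

namespace IrrationalOnRatCombinations

variable {ι : Type*} {g : (ι → ℝ) → ℝ} {N : ℕ} [NeZero N]

lemma sum_torusPoint_ne (hg : IrrationalOnRatCombinations g) (s : Finset (ι → ZMod N))
    (y : (ι → ZMod N) → ℤ) {p₀ : ι → ZMod N} (hp₀ : p₀ ∈ s) (hy : y p₀ ≠ 0) (q : ℚ) :
    ∑ p ∈ s, (y p : ℝ) * g (torusPoint N p) ≠ q := by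
  intro hsum
  let idx := s.equivFin
  refine hg #s (card_pos.2 ⟨p₀, hp₀⟩) (fun i => y (idx.symm i)) ?_
    (fun i => torusPoint N (idx.symm i)) ?_ ?_ q ?_
  · intro h
    exact hy (by simpa using congrFun h (idx ⟨p₀, hp₀⟩))
  · intro i l
    refine ⟨((idx.symm i : ι → ZMod N) l).val / N, ?_⟩
    simp only [torusPoint, Rat.cast_div, Rat.cast_natCast]
  · intro i j hij h
    exact hij (idx.symm.injective (Subtype.ext (eq_of_torusPoint_sub_mem_int h)))
  · rw [← hsum, ← sum_coe_sort s]
    exact idx.symm.sum_comp fun p => (y p : ℝ) * g (torusPoint N p)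

lemma mul_sum_sub_mul_sum_ne (hg : IrrationalOnRatCombinations g)
    {s t : Finset (ι → ZMod N)} (hst : Disjoint s t) (hs : s.Nonempty) {a : ℤ} (ha : a ≠ 0)
    (b : ℤ) (q : ℚ) :
    a * ∑ p ∈ s, g (torusPoint N p) - b * ∑ p ∈ t, g (torusPoint N p) ≠ q := by
  classical
  obtain ⟨p₀, hp₀⟩ := hs
  have hsplit : ∑ p ∈ s ∪ t, ((if p ∈ s then a else -b : ℤ) : ℝ) * g (torusPoint N p) =
      a * ∑ p ∈ s, g (torusPoint N p) - b * ∑ p ∈ t, g (torusPoint N p) := by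
    rw [sum_union hst, mul_sum, mul_sum, sub_eq_add_neg, ← sum_neg_distrib]
    congr 1 <;> refine sum_congr rfl fun p hp => ?_
    · simp [hp]
    · simp [disjoint_right.1 hst hp]
  rw [← hsplit]
  exact hg.sum_torusPoint_ne _ _ (mem_union_left t hp₀) (by simpa [hp₀] using ha) q

end IrrationalOnRatCombinations

lemma eq_of_div_sub_div_eq_int {T j k : ℕ} (hj1 : 1 ≤ j) (hjT : j ≤ T) (hk1 : 1 ≤ k)
    (hkT : k ≤ T) {z : ℤ} (h : (j : ℝ) / T - k / T = z) : j = k := by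
  have hT : (T : ℝ) ≠ 0 := by exact_mod_cast (by omega : T ≠ 0)
  have hz : (j : ℤ) - k = T * z := by
    have : (j : ℝ) - k = T * z := by
      field_simp at h
      linarith
    exact_mod_cast this
  have := Int.eq_zero_of_abs_lt_dvd ⟨z, hz⟩ (by rw [abs_lt]; omega)
  omega

theorem stmt9_general (g : (Fin 2 → ℝ) → ℝ)
    (hg : ∀ n : ℕ, 1 ≤ n → ∀ y : Fin n → ℤ, y ≠ 0 →
      ∀ x : Fin n → (Fin 2 → ℝ), (∀ i l, ∃ q : ℚ, x i l = (q : ℝ)) →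
        (∀ i j, i ≠ j → ¬ ∀ l, ∃ k : ℤ, x i l - x j l = (k : ℝ)) →
      ∀ z : ℚ, ∑ i, (y i : ℝ) * g (x i) ≠ (z : ℝ))
    (N : ℕ) [NeZero N]
    (B : Matrix (Fin 2) (Fin 2) (ZMod N)) (hB : IsUnit B.det)
    (T : (Fin 2 → ZMod N) → ℕ)
    (hT : ∀ ξ, T ξ = Set.ncard {Q | ∃ k : ℕ, Q = (B ^ k).mulVec ξ})
    (lam : (Fin 2 → ZMod N) → ℕ → ℂ)
    (hlam : ∀ ξ j, lam ξ j =
      e ((N : ℝ) / T ξ *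
          ∑ n ∈ Finset.Icc 1 (T ξ), g (fun i => (((B ^ n).mulVec ξ i).val : ℝ) / N)
        + (j : ℝ) / T ξ))
    (ξ η : Fin 2 → ZMod N) (j k : ℕ)
    (hj1 : 1 ≤ j) (hjT : j ≤ T ξ) (hk1 : 1 ≤ k) (hkT : k ≤ T η)
    (heq : lam ξ j = lam η k) :
    {Q | ∃ m : ℕ, Q = (B ^ m).mulVec ξ} = {Q | ∃ m : ℕ, Q = (B ^ m).mulVec η} ∧ j = k := by
  have hper : ∀ v, v ∈ periodicPts B.mulVec :=
    (Matrix.mulVec_injective_of_isUnit ((Matrix.isUnit_iff_isUnit_det B).2 hB)).mem_periodicPts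
  have horbit : ∀ v, {Q | ∃ m : ℕ, Q = (B ^ m).mulVec v} = orbitFinset B.mulVec v := fun v => by
    simp only [Matrix.pow_mulVec_eq_iterate, coe_orbitFinset (hper v)]
  have hcard : ∀ v, T v = #(orbitFinset B.mulVec v) := fun v => by
    rw [hT, horbit, Set.ncard_coe_finset]
  have hTpos : ∀ v, 0 < T v := fun v => by
    rw [hcard, card_orbitFinset (hper v)]
    exact minimalPeriod_pos_of_mem_periodicPts (hper v)
  have hsum : ∀ v, ∑ n ∈ Icc 1 (T v), g (fun i => (((B ^ n).mulVec v i).val : ℝ) / N) =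
      ∑ p ∈ orbitFinset B.mulVec v, g (torusPoint N p) := fun v => by
    simp only [sum_orbitFinset (hper v), hcard, card_orbitFinset (hper v),
      Matrix.pow_mulVec_eq_iterate]
    rfl
  rw [hlam, hlam, hsum, hsum] at heq
  obtain ⟨z, hz⟩ := exists_int_sub_eq_of_e_eq heq
  simp only [horbit, coe_inj]
  by_cases hO : orbitFinset B.mulVec ξ = orbitFinset B.mulVec η
  · have hTeq : T η = T ξ := by rw [hcard, hcard, hO]
    rw [hTeq, hO] at hz
    exact ⟨hO, eq_of_div_sub_div_eq_int hj1 hjT hk1 (hTeq ▸ hkT) (by rw [← hz]; ring)⟩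
  · have hNT : (N : ℤ) * T η ≠ 0 :=
      mul_ne_zero (Nat.cast_ne_zero.2 (NeZero.ne N)) (Nat.cast_ne_zero.2 (hTpos η).ne')
    refine absurd ?_ (IrrationalOnRatCombinations.mul_sum_sub_mul_sum_ne hg
      (disjoint_orbitFinset (hper ξ) (hper η) hO) ⟨ξ, self_mem_orbitFinset (hper ξ)⟩ hNT
      (N * T ξ) (z * T ξ * T η - j * T η + k * T ξ))
    have := hTpos ξ
    have := hTpos η
    field_simp at hz
    push_cast
    linear_combination hz

/-- if `g : 𝕋² → ℝ` takes no rational value on nontrivial integer combinations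
of distinct rational points, then the eigenvalues
`λ_{ξ,j} = exp(2πi((N/T_ξ) Σ_{n=1}^{T_ξ} g(B^n ξ / N) + j/T_ξ))` satisfy:
`λ_{ξ,j} = λ_{η,k}` implies `[ξ] = [η]` and `j = k`. -/
theorem stmt9 (g : (Fin 2 → ℝ) → ℝ)
    (hper : ∀ v m : Fin 2 → ℝ, (∀ i, ∃ k : ℤ, m i = (k : ℝ)) → g (v + m) = g v)
    (hg : ∀ n : ℕ, 1 ≤ n → ∀ y : Fin n → ℤ, y ≠ 0 →
      ∀ x : Fin n → (Fin 2 → ℝ), (∀ i l, ∃ q : ℚ, x i l = (q : ℝ)) →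
        (∀ i j, i ≠ j → ¬ ∀ l, ∃ k : ℤ, x i l - x j l = (k : ℝ)) →
      ∀ z : ℚ, ∑ i, (y i : ℝ) * g (x i) ≠ (z : ℝ))
    (N : ℕ) [NeZero N] (hN : 1 ≤ N)
    (B : Matrix (Fin 2) (Fin 2) (ZMod N)) (hB : IsUnit B.det)
    (T : (Fin 2 → ZMod N) → ℕ)
    (hT : ∀ ξ, T ξ = Set.ncard {Q | ∃ k : ℕ, Q = (B ^ k).mulVec ξ})
    (lam : (Fin 2 → ZMod N) → ℕ → ℂ)
    (hlam : ∀ ξ j, lam ξ j =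
      e ((N : ℝ) / T ξ *
          ∑ n ∈ Finset.Icc 1 (T ξ), g (fun i => (((B ^ n).mulVec ξ i).val : ℝ) / N)
        + (j : ℝ) / T ξ))
    (ξ η : Fin 2 → ZMod N) (j k : ℕ)
    (hj1 : 1 ≤ j) (hjT : j ≤ T ξ) (hk1 : 1 ≤ k) (hkT : k ≤ T η)
    (heq : lam ξ j = lam η k) :
    {Q | ∃ m : ℕ, Q = (B ^ m).mulVec ξ} = {Q | ∃ m : ℕ, Q = (B ^ m).mulVec η} ∧ j = k :=
  stmt9_general g hg N B hB T hT lam hlam ξ η j k hj1 hjT hk1 hkT heq
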